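/- Let Γ be a symmetric p×p matrix such that |θᵀΓθ| ≤ δ for all unit vectors θ with at most 2s nonzero entries, and let Σ be a symmetric p×p matrix with λ_min(Σ) ≥ μ. If Ŝ = Σ + Γ (so that |θᵀ(Ŝ − Σ)θ| ≤ δ on the 2s-sparse cone), then for all θ ∈ ℝ^p: θᵀŜθ ≥ (μ − 27δ)‖θ‖₂² − (27δ/s)‖θ‖₁². -/
import Mathlib


open Matrix Finset

lemma lw_dot_sum_left {p : ℕ} (t : Finset ℕ) (u : ℕ → Fin p → ℝ) (w : Fin p → ℝ) :
    (∑ k ∈ t, u k) ⬝ᵥ w = ∑ k ∈ t, u k ⬝ᵥ w := by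
  simp only [dotProduct, Finset.sum_apply, Finset.sum_mul]
  exact Finset.sum_comm

lemma lw_dot_sum_right {p : ℕ} (t : Finset ℕ) (x : Fin p → ℝ) (w : ℕ → Fin p → ℝ) :
    x ⬝ᵥ (∑ k ∈ t, w k) = ∑ k ∈ t, x ⬝ᵥ w k := by
  simp only [dotProduct, Finset.sum_apply, Finset.mul_sum]
  exact Finset.sum_comm

lemma lw_mulVec_sum {p : ℕ} (A : Matrix (Fin p) (Fin p) ℝ) (t : Finset ℕ)
    (w : ℕ → Fin p → ℝ) : A.mulVec (∑ k ∈ t, w k) = ∑ k ∈ t, A.mulVec (w k) := by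
  funext i
  simp only [Matrix.mulVec, Finset.sum_apply]
  exact lw_dot_sum_right t _ w

lemma lw_quad {p : ℕ} (s : ℕ) (Γ : Matrix (Fin p) (Fin p) ℝ) (δ : ℝ)
    (hΓ : ∀ θ : Fin p → ℝ, Real.sqrt (∑ i, θ i ^ 2) ≤ 1 →
      (Function.support θ).ncard ≤ 2 * s → |θ ⬝ᵥ Γ.mulVec θ| ≤ δ)
    (z : Fin p → ℝ) (hz : (Function.support z).ncard ≤ 2 * s) :
    |z ⬝ᵥ Γ.mulVec z| ≤ δ * ∑ i, z i ^ 2 := by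
  by_cases h0 : ∑ i, z i ^ 2 = 0
  · have hz0 : z = 0 := by
      funext i
      have h := (Finset.sum_eq_zero_iff_of_nonneg (fun i _ => sq_nonneg (z i))).1 h0 i (mem_univ i)
      exact pow_eq_zero_iff two_ne_zero |>.1 h
    simp [hz0, h0]
  · have hpos : 0 < ∑ i, z i ^ 2 :=
      lt_of_le_of_ne (Finset.sum_nonneg fun i _ => sq_nonneg _) (Ne.symm h0)
    set t := Real.sqrt (∑ i, z i ^ 2) with ht
    have htpos : 0 < t := Real.sqrt_pos.2 hpos
    have ht2 : t ^ 2 = ∑ i, z i ^ 2 := Real.sq_sqrt hpos.le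
    have hsum : ∑ i, ((t⁻¹ • z) i) ^ 2 = 1 := by
      simp only [Pi.smul_apply, smul_eq_mul, mul_pow]
      rw [← Finset.mul_sum, ← ht2]
      field_simp
    have hsupp : (Function.support (t⁻¹ • z)).ncard ≤ 2 * s := by
      refine le_trans (Set.ncard_le_ncard ?_ (Set.toFinite _)) hz
      exact Function.support_smul_subset_right _ _
    have hb := hΓ (t⁻¹ • z) (by rw [hsum, Real.sqrt_one]) hsupp
    have hkey : (t⁻¹ • z) ⬝ᵥ Γ.mulVec (t⁻¹ • z) = t⁻¹ ^ 2 * (z ⬝ᵥ Γ.mulVec z) := by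
      simp only [Matrix.mulVec_smul, smul_dotProduct, dotProduct_smul, smul_eq_mul]
      ring
    rw [hkey, abs_mul, abs_of_nonneg (by positivity : (0:ℝ) ≤ t⁻¹ ^ 2)] at hb
    have h1 : t⁻¹ ^ 2 * t ^ 2 = 1 := by field_simp
    have h2 : |z ⬝ᵥ Γ.mulVec z| = t ^ 2 * (t⁻¹ ^ 2 * |z ⬝ᵥ Γ.mulVec z|) := by
      field_simp
    rw [h2, ← ht2] at *
    calc t ^ 2 * (t⁻¹ ^ 2 * |z ⬝ᵥ Γ.mulVec z|) ≤ t ^ 2 * δ :=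
          mul_le_mul_of_nonneg_left hb (sq_nonneg t)
      _ = δ * t ^ 2 := by ring

lemma lw_bilin {p : ℕ} (s : ℕ) (Γ : Matrix (Fin p) (Fin p) ℝ) (δ : ℝ)
    (hΓsym : Γᵀ = Γ)
    (hquad : ∀ z : Fin p → ℝ, (Function.support z).ncard ≤ 2 * s →
      |z ⬝ᵥ Γ.mulVec z| ≤ δ * ∑ i, z i ^ 2)
    (x y : Fin p → ℝ)
    (hx : (Function.support x).ncard ≤ s) (hy : (Function.support y).ncard ≤ s) :
    |x ⬝ᵥ Γ.mulVec y| ≤ δ * Real.sqrt (∑ i, x i ^ 2) * Real.sqrt (∑ i, y i ^ 2) := by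
  have hsymm : y ⬝ᵥ Γ.mulVec x = x ⬝ᵥ Γ.mulVec y := by
    rw [Matrix.dotProduct_mulVec y Γ x]
    conv_lhs => rw [← hΓsym]
    rw [Matrix.vecMul_transpose, dotProduct_comm]
  by_cases hx0 : ∑ i, x i ^ 2 = 0
  · have : x = 0 := by
      funext i
      exact pow_eq_zero_iff two_ne_zero |>.1
        ((Finset.sum_eq_zero_iff_of_nonneg (fun i _ => sq_nonneg (x i))).1 hx0 i (mem_univ i))
    simp [this, hx0]
  by_cases hy0 : ∑ i, y i ^ 2 = 0
  · have : y = 0 := by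
      funext i
      exact pow_eq_zero_iff two_ne_zero |>.1
        ((Finset.sum_eq_zero_iff_of_nonneg (fun i _ => sq_nonneg (y i))).1 hy0 i (mem_univ i))
    simp [this, hy0]
  have hxpos : 0 < ∑ i, x i ^ 2 :=
    lt_of_le_of_ne (Finset.sum_nonneg fun i _ => sq_nonneg _) (Ne.symm hx0)
  have hypos : 0 < ∑ i, y i ^ 2 :=
    lt_of_le_of_ne (Finset.sum_nonneg fun i _ => sq_nonneg _) (Ne.symm hy0)
  set a := Real.sqrt (∑ i, x i ^ 2) with ha
  set b := Real.sqrt (∑ i, y i ^ 2) with hb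
  have hapos : 0 < a := Real.sqrt_pos.2 hxpos
  have hbpos : 0 < b := Real.sqrt_pos.2 hypos
  have ha2 : a ^ 2 = ∑ i, x i ^ 2 := Real.sq_sqrt hxpos.le
  have hb2 : b ^ 2 = ∑ i, y i ^ 2 := Real.sq_sqrt hypos.le
  set u : Fin p → ℝ := b • x + a • y with hu
  set w : Fin p → ℝ := b • x - a • y with hw
  have hsuppu : (Function.support u).ncard ≤ 2 * s := by
    have h1 : Function.support u ⊆ Function.support x ∪ Function.support y := by
      intro i hi
      by_contra hni
      simp only [Set.mem_union, Function.mem_support, not_or, not_not] at hni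
      apply hi
      simp [hu, hni.1, hni.2]
    calc (Function.support u).ncard
        ≤ (Function.support x ∪ Function.support y).ncard :=
          Set.ncard_le_ncard h1 (Set.toFinite _)
      _ ≤ (Function.support x).ncard + (Function.support y).ncard :=
          Set.ncard_union_le _ _
      _ ≤ 2 * s := by omega
  have hsuppw : (Function.support w).ncard ≤ 2 * s := by
    have h1 : Function.support w ⊆ Function.support x ∪ Function.support y := by
      intro i hi
      by_contra hni
      simp only [Set.mem_union, Function.mem_support, not_or, not_not] at hni
      apply hi
      simp [hw, hni.1, hni.2]
    calc (Function.support w).ncard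
        ≤ (Function.support x ∪ Function.support y).ncard :=
          Set.ncard_le_ncard h1 (Set.toFinite _)
      _ ≤ (Function.support x).ncard + (Function.support y).ncard :=
          Set.ncard_union_le _ _
      _ ≤ 2 * s := by omega
  have hQu : u ⬝ᵥ Γ.mulVec u =
      b ^ 2 * (x ⬝ᵥ Γ.mulVec x) + 2 * (a * b) * (x ⬝ᵥ Γ.mulVec y)
        + a ^ 2 * (y ⬝ᵥ Γ.mulVec y) := by
    simp only [hu, Matrix.mulVec_add, Matrix.mulVec_smul, dotProduct_add, add_dotProduct,
      dotProduct_smul, smul_dotProduct, smul_eq_mul, hsymm]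
    ring
  have hQw : w ⬝ᵥ Γ.mulVec w =
      b ^ 2 * (x ⬝ᵥ Γ.mulVec x) - 2 * (a * b) * (x ⬝ᵥ Γ.mulVec y)
        + a ^ 2 * (y ⬝ᵥ Γ.mulVec y) := by
    simp only [hw, Matrix.mulVec_sub, Matrix.mulVec_smul, dotProduct_sub, sub_dotProduct,
      dotProduct_smul, smul_dotProduct, smul_eq_mul, hsymm]
    ring
  have hsu : ∑ i, u i ^ 2 =
      b ^ 2 * ∑ i, x i ^ 2 + 2 * (a * b) * ∑ i, x i * y i + a ^ 2 * ∑ i, y i ^ 2 := by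
    simp only [hu, Pi.add_apply, Pi.smul_apply, smul_eq_mul]
    rw [Finset.mul_sum, Finset.mul_sum, Finset.mul_sum, ← Finset.sum_add_distrib,
      ← Finset.sum_add_distrib]
    exact Finset.sum_congr rfl fun i _ => by ring
  have hsw : ∑ i, w i ^ 2 =
      b ^ 2 * ∑ i, x i ^ 2 - 2 * (a * b) * ∑ i, x i * y i + a ^ 2 * ∑ i, y i ^ 2 := by
    simp only [hw, Pi.sub_apply, Pi.smul_apply, smul_eq_mul]
    rw [Finset.mul_sum, Finset.mul_sum, Finset.mul_sum, ← Finset.sum_sub_distrib,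
      ← Finset.sum_add_distrib]
    exact Finset.sum_congr rfl fun i _ => by ring
  have h1 := hquad u hsuppu
  have h2 := hquad w hsuppw
  have h4 : u ⬝ᵥ Γ.mulVec u - w ⬝ᵥ Γ.mulVec w = 4 * (a * b) * (x ⬝ᵥ Γ.mulVec y) := by
    rw [hQu, hQw]; ring
  have habs : |4 * (a * b) * (x ⬝ᵥ Γ.mulVec y)| ≤ δ * (4 * (a ^ 2 * b ^ 2)) := by
    rw [← h4]
    calc |u ⬝ᵥ Γ.mulVec u - w ⬝ᵥ Γ.mulVec w|
        ≤ |u ⬝ᵥ Γ.mulVec u| + |w ⬝ᵥ Γ.mulVec w| := abs_sub _ _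
      _ ≤ δ * ∑ i, u i ^ 2 + δ * ∑ i, w i ^ 2 := add_le_add h1 h2
      _ = δ * (4 * (a ^ 2 * b ^ 2)) := by
          rw [hsu, hsw, ← ha2, ← hb2]; ring
  rw [abs_mul, abs_of_nonneg (by positivity : (0:ℝ) ≤ 4 * (a * b))] at habs
  nlinarith [mul_pos hapos hbpos, abs_nonneg (x ⬝ᵥ Γ.mulVec y)]


/-- Loh–Wainwright-type extension: if a symmetric `Γ` satisfies `|θᵀΓθ| ≤ δ` on the
`2s`-sparse unit ball and `Sig` is symmetric with `θᵀ·Sig·θ ≥ μ‖θ‖₂²`, then for `Ŝ = Sig + Γ`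
and all `θ`, `θᵀŜθ ≥ (μ − 27δ)‖θ‖₂² − (27δ/s)‖θ‖₁²`. -/
theorem stmt16 {p : ℕ} (s : ℕ) (hs : 0 < s)
    (Γ Sig Shat : Matrix (Fin p) (Fin p) ℝ)
    (hΓsym : Γᵀ = Γ) (hSigsym : Sigᵀ = Sig) (δ μ : ℝ)
    (hΓ : ∀ θ : Fin p → ℝ, Real.sqrt (∑ i, θ i ^ 2) ≤ 1 →
      (Function.support θ).ncard ≤ 2 * s → |θ ⬝ᵥ Γ.mulVec θ| ≤ δ)
    (hSig : ∀ θ : Fin p → ℝ, μ * ∑ i, θ i ^ 2 ≤ θ ⬝ᵥ Sig.mulVec θ)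
    (hShat : Shat = Sig + Γ) :
    ∀ θ : Fin p → ℝ,
      (μ - 27 * δ) * (∑ i, θ i ^ 2) - (27 * δ / s) * (∑ i, |θ i|) ^ 2
        ≤ θ ⬝ᵥ Shat.mulVec θ := by
  intro θ
  have hδ : 0 ≤ δ := by simpa using hΓ 0 (by simp) (by simp)
  have hquad := lw_quad s Γ δ hΓ
  have hbil := lw_bilin s Γ δ hΓsym hquad
  have hscast : (0:ℝ) < (s:ℝ) := by exact_mod_cast hs
  rcases Nat.eq_zero_or_pos p with hp | hp
  · subst hp
    simp [dotProduct]
  -- sorting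
  set f : Fin p → ℝ := fun i => -|θ i| with hf
  set σ : Equiv.Perm (Fin p) := Tuple.sort f with hσ
  have hmono : Monotone (f ∘ σ) := Tuple.monotone_sort f
  have hanti : ∀ {i j : Fin p}, i ≤ j → |θ (σ j)| ≤ |θ (σ i)| := by
    intro i j hij
    have := hmono hij
    simp only [Function.comp_apply, hf, neg_le_neg_iff] at this
    exact this
  set v : ℕ → Fin p → ℝ := fun k i => if (σ.symm i : ℕ) / s = k then θ i else 0 with hv
  have hmemr : ∀ i : Fin p, (σ.symm i : ℕ) / s ∈ Finset.range p := fun i =>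
    Finset.mem_range.2 (lt_of_le_of_lt (Nat.div_le_self _ _) (σ.symm i).isLt)
  have hvθ : ∀ i, ∑ k ∈ Finset.range p, v k i = θ i := by
    intro i
    rw [show (∑ k ∈ Finset.range p, v k i)
        = ∑ k ∈ Finset.range p, if (σ.symm i : ℕ) / s = k then θ i else 0 from rfl,
      Finset.sum_ite_eq, if_pos (hmemr i)]
  have hθv : θ = ∑ k ∈ Finset.range p, v k := by
    funext i
    rw [Finset.sum_apply]
    exact (hvθ i).symm
  have hsq : ∑ k ∈ Finset.range p, ∑ i, v k i ^ 2 = ∑ i, θ i ^ 2 := by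
    rw [Finset.sum_comm]
    refine Finset.sum_congr rfl fun i _ => ?_
    have h1 : ∀ k, v k i ^ 2 = if (σ.symm i : ℕ) / s = k then θ i ^ 2 else 0 := by
      intro k
      by_cases h : (σ.symm i : ℕ) / s = k <;> simp [hv, h]
    simp_rw [h1]
    rw [Finset.sum_ite_eq, if_pos (hmemr i)]
  have habs1 : ∑ k ∈ Finset.range p, ∑ i, |v k i| = ∑ i, |θ i| := by
    rw [Finset.sum_comm]
    refine Finset.sum_congr rfl fun i _ => ?_
    have h1 : ∀ k, |v k i| = if (σ.symm i : ℕ) / s = k then |θ i| else 0 := by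
      intro k
      by_cases h : (σ.symm i : ℕ) / s = k <;> simp [hv, h]
    simp_rw [h1]
    rw [Finset.sum_ite_eq, if_pos (hmemr i)]
  have hsupp : ∀ k, (Function.support (v k)).ncard ≤ s := by
    intro k
    have h1 : Function.support (v k) ⊆ σ '' {j : Fin p | (j : ℕ) / s = k} := by
      intro i hi
      have hdiv : (σ.symm i : ℕ) / s = k := by
        by_contra h
        exact hi (by simp [hv, h])
      exact ⟨σ.symm i, hdiv, Equiv.apply_symm_apply σ i⟩
    have h2 : ({j : Fin p | (j : ℕ) / s = k} : Set (Fin p)).ncard ≤ s := by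
      have h3 : (Fin.val '' {j : Fin p | (j : ℕ) / s = k}) ⊆ Set.Ico (k*s) (k*s+s) := by
        rintro n ⟨j, hj, rfl⟩
        simp only [Set.mem_setOf_eq] at hj
        constructor
        · calc k * s = (j : ℕ) / s * s := by rw [hj]
            _ ≤ (j : ℕ) := Nat.div_mul_le_self _ _
        · have h5 : (j : ℕ) / s < k + 1 := by omega
          have h6 := (Nat.div_lt_iff_lt_mul hs).1 h5
          rw [Nat.succ_mul] at h6
          omega
      have h4 : (Set.Ico (k*s) (k*s+s)).ncard = s := by
        rw [← Finset.coe_Ico, Set.ncard_coe_finset, Nat.card_Ico]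
        omega
      calc ({j : Fin p | (j : ℕ) / s = k} : Set (Fin p)).ncard
          = (Fin.val '' {j : Fin p | (j : ℕ) / s = k}).ncard :=
            (Set.ncard_image_of_injective _ Fin.val_injective).symm
        _ ≤ (Set.Ico (k*s) (k*s+s)).ncard := Set.ncard_le_ncard h3 (Set.finite_Ico _ _)
        _ = s := h4
    calc (Function.support (v k)).ncard
        ≤ (σ '' {j : Fin p | (j : ℕ) / s = k}).ncard :=
          Set.ncard_le_ncard h1 (Set.toFinite _)
      _ = ({j : Fin p | (j : ℕ) / s = k} : Set (Fin p)).ncard :=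
          Set.ncard_image_of_injective _ σ.injective
      _ ≤ s := h2
  -- shelling key inequality
  have hkey : ∀ k, ∀ i : Fin p, v (k+1) i ≠ 0 → (s:ℝ) * |v (k+1) i| ≤ ∑ j, |v k j| := by
    intro k i hi
    have hdiv : (σ.symm i : ℕ) / s = k + 1 := by
      by_contra h
      exact hi (by simp [hv, h])
    have hθi : v (k+1) i = θ i := by simp [hv, hdiv]
    have hge : (k+1) * s ≤ (σ.symm i : ℕ) := by
      calc (k+1) * s = (σ.symm i : ℕ) / s * s := by rw [hdiv]
        _ ≤ (σ.symm i : ℕ) := Nat.div_mul_le_self _ _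
    have hLB : ∑ j, |v k j| = ∑ m : Fin p, if (m:ℕ)/s = k then |θ (σ m)| else 0 := by
      rw [← Equiv.sum_comp σ (fun j => |v k j|)]
      refine Finset.sum_congr rfl fun m _ => ?_
      by_cases h : (m:ℕ)/s = k <;> simp [hv, h]
    have hterm : ∀ m : Fin p,
        (if (m:ℕ)/s = k then |θ i| else 0) ≤ (if (m:ℕ)/s = k then |θ (σ m)| else 0) := by
      intro m
      split
      · next h =>
          have hmlt : (m:ℕ) < (k+1) * s := by
            have h5 : (m:ℕ)/s < k + 1 := by omega
            exact (Nat.div_lt_iff_lt_mul hs).1 h5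
          have hle : m ≤ σ.symm i := by
            rw [Fin.le_def]
            omega
          have := hanti hle
          simpa [Equiv.apply_symm_apply] using this
      · exact le_refl _
    have hcard : s ≤ (Finset.univ.filter fun m : Fin p => (m:ℕ)/s = k).card := by
      have hmaps : ∀ n ∈ Finset.Ico (k*s) (k*s+s),
          (⟨n % p, Nat.mod_lt n hp⟩ : Fin p) ∈
            (Finset.univ.filter fun m : Fin p => (m:ℕ)/s = k) := by
        intro n hn
        rw [Finset.mem_Ico] at hn
        have hnp : n < p := by
          have : (k+1)*s ≤ (σ.symm i : ℕ) := hge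
          have h7 : (σ.symm i : ℕ) < p := (σ.symm i).isLt
          have h8 : (k+1)*s = k*s + s := by rw [Nat.succ_mul]
          omega
        have hmod : n % p = n := Nat.mod_eq_of_lt hnp
        simp only [Finset.mem_filter, Finset.mem_univ, true_and]
        show (n % p) / s = k
        rw [hmod]
        exact Nat.div_eq_of_lt_le (by omega) (by rw [Nat.succ_mul]; omega)
      have hinj : Set.InjOn (fun n : ℕ => (⟨n % p, Nat.mod_lt n hp⟩ : Fin p))
          (Finset.Ico (k*s) (k*s+s)) := by
        intro n₁ h₁ n₂ h₂ h12
        rw [Finset.coe_Ico, Set.mem_Ico] at h₁ h₂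
        have hnp₁ : n₁ < p := by
          have h7 : (σ.symm i : ℕ) < p := (σ.symm i).isLt
          have h8 : (k+1)*s = k*s + s := by rw [Nat.succ_mul]
          omega
        have hnp₂ : n₂ < p := by
          have h7 : (σ.symm i : ℕ) < p := (σ.symm i).isLt
          have h8 : (k+1)*s = k*s + s := by rw [Nat.succ_mul]
          omega
        have := congrArg Fin.val h12
        simp only [Nat.mod_eq_of_lt hnp₁, Nat.mod_eq_of_lt hnp₂] at this
        exact this
      have := Finset.card_le_card_of_injOn _ hmaps hinj
      simpa [Nat.card_Ico] using this
    have hconst : (s:ℝ) * |θ i| ≤ ∑ m : Fin p, if (m:ℕ)/s = k then |θ i| else 0 := by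
      rw [Finset.sum_ite, Finset.sum_const, Finset.sum_const_zero, add_zero, nsmul_eq_mul]
      exact mul_le_mul_of_nonneg_right (by exact_mod_cast hcard) (abs_nonneg _)
    calc (s:ℝ) * |v (k+1) i| = (s:ℝ) * |θ i| := by rw [hθi]
      _ ≤ ∑ m : Fin p, if (m:ℕ)/s = k then |θ i| else 0 := hconst
      _ ≤ ∑ m : Fin p, if (m:ℕ)/s = k then |θ (σ m)| else 0 :=
          Finset.sum_le_sum fun m _ => hterm m
      _ = ∑ j, |v k j| := hLB.symm
  set L : ℕ → ℝ := fun k => ∑ i, |v k i| with hL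
  set Nk : ℕ → ℝ := fun k => Real.sqrt (∑ i, v k i ^ 2) with hNk
  have hLnn : ∀ k, 0 ≤ L k := fun k => Finset.sum_nonneg fun _ _ => abs_nonneg _
  have hNnn : ∀ k, 0 ≤ Nk k := fun k => Real.sqrt_nonneg _
  have hcardF : ∀ k, ((Finset.univ.filter fun i => v k i ≠ 0).card : ℕ) ≤ s := by
    intro k
    have he : ↑(Finset.univ.filter fun i => v k i ≠ 0) = Function.support (v k) := by
      ext i; simp [Function.mem_support]
    have := hsupp k
    rwa [← he, Set.ncard_coe_finset] at this
  have hshell : ∀ k, Nk (k+1) ≤ L k / Real.sqrt s := by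
    intro k
    have hptb : ∀ i : Fin p, v (k+1) i ≠ 0 → |v (k+1) i| ≤ L k / s := by
      intro i hi
      rw [le_div_iff₀ hscast]
      calc |v (k+1) i| * s = s * |v (k+1) i| := by ring
        _ ≤ L k := hkey k i hi
    have h5 : ∑ i, |v (k+1) i| ≤ L k := by
      rw [← Finset.sum_filter_of_ne
        (p := fun i => v (k+1) i ≠ 0) (fun i _ h => by simpa [abs_ne_zero] using h)]
      calc ∑ i ∈ Finset.univ.filter (fun i => v (k+1) i ≠ 0), |v (k+1) i|
          ≤ ∑ i ∈ Finset.univ.filter (fun i => v (k+1) i ≠ 0), L k / s :=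
            Finset.sum_le_sum fun i hi => hptb i (Finset.mem_filter.1 hi).2
        _ = ((Finset.univ.filter fun i => v (k+1) i ≠ 0).card : ℝ) * (L k / s) := by
            rw [Finset.sum_const, nsmul_eq_mul]
        _ ≤ (s : ℝ) * (L k / s) := by
            apply mul_le_mul_of_nonneg_right _ (by positivity)
            exact_mod_cast hcardF (k+1)
        _ = L k := by field_simp
    have hsum2 : ∑ i, v (k+1) i ^ 2 ≤ L k ^ 2 / s := by
      calc ∑ i, v (k+1) i ^ 2 = ∑ i, |v (k+1) i| * |v (k+1) i| := by
            refine Finset.sum_congr rfl fun i _ => ?_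
            rw [sq, abs_mul_abs_self]
        _ ≤ ∑ i, |v (k+1) i| * (L k / s) := by
            refine Finset.sum_le_sum fun i _ => ?_
            by_cases hi : v (k+1) i = 0
            · simp [hi]
            · exact mul_le_mul_of_nonneg_left (hptb i hi) (abs_nonneg _)
        _ = (∑ i, |v (k+1) i|) * (L k / s) := by rw [← Finset.sum_mul]
        _ ≤ L k * (L k / s) := mul_le_mul_of_nonneg_right h5 (by positivity)
        _ = L k ^ 2 / s := by ring
    calc Nk (k+1) ≤ Real.sqrt (L k ^ 2 / s) := Real.sqrt_le_sqrt hsum2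
      _ = L k / Real.sqrt s := by
          rw [Real.sqrt_div (sq_nonneg _), Real.sqrt_sq (hLnn k)]
  have hN0 : Nk 0 ≤ Real.sqrt (∑ i, θ i ^ 2) := by
    apply Real.sqrt_le_sqrt
    refine Finset.sum_le_sum fun i _ => ?_
    by_cases h : (σ.symm i : ℕ) / s = 0 <;> simp [hv, h, sq_nonneg]
  have hsumN : ∑ k ∈ Finset.range p, Nk k
      ≤ Real.sqrt (∑ i, θ i ^ 2) + (∑ i, |θ i|) / Real.sqrt s := by
    obtain ⟨q, rfl⟩ : ∃ q, p = q + 1 := ⟨p - 1, by omega⟩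
    rw [Finset.sum_range_succ']
    have hA : ∑ k ∈ Finset.range q, Nk (k+1) ≤ (∑ i, |θ i|) / Real.sqrt s := by
      have hsqrtpos : (0:ℝ) < Real.sqrt s := Real.sqrt_pos.2 hscast
      calc ∑ k ∈ Finset.range q, Nk (k+1)
          ≤ ∑ k ∈ Finset.range q, L k / Real.sqrt s :=
            Finset.sum_le_sum fun k _ => hshell k
        _ = (∑ k ∈ Finset.range q, L k) / Real.sqrt s := by rw [Finset.sum_div]
        _ ≤ (∑ k ∈ Finset.range (q+1), L k) / Real.sqrt s := by
            gcongr
            omega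
        _ = (∑ i, |θ i|) / Real.sqrt s := by rw [habs1]
    linarith [hN0]
  -- bound on the Γ quadratic form
  have hΓθ : |θ ⬝ᵥ Γ.mulVec θ| ≤ δ * (∑ k ∈ Finset.range p, Nk k) ^ 2 := by
    have hexp : θ ⬝ᵥ Γ.mulVec θ
        = ∑ k ∈ Finset.range p, ∑ l ∈ Finset.range p, v k ⬝ᵥ Γ.mulVec (v l) := by
      conv_lhs => rw [hθv]
      rw [lw_mulVec_sum, lw_dot_sum_left]
      exact Finset.sum_congr rfl fun k _ => lw_dot_sum_right _ _ _
    rw [hexp]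
    calc |∑ k ∈ Finset.range p, ∑ l ∈ Finset.range p, v k ⬝ᵥ Γ.mulVec (v l)|
        ≤ ∑ k ∈ Finset.range p, |∑ l ∈ Finset.range p, v k ⬝ᵥ Γ.mulVec (v l)| :=
          Finset.abs_sum_le_sum_abs _ _
      _ ≤ ∑ k ∈ Finset.range p, ∑ l ∈ Finset.range p, |v k ⬝ᵥ Γ.mulVec (v l)| :=
          Finset.sum_le_sum fun k _ => Finset.abs_sum_le_sum_abs _ _
      _ ≤ ∑ k ∈ Finset.range p, ∑ l ∈ Finset.range p, δ * Nk k * Nk l :=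
          Finset.sum_le_sum fun k _ => Finset.sum_le_sum fun l _ =>
            hbil (v k) (v l) (hsupp k) (hsupp l)
      _ = δ * (∑ k ∈ Finset.range p, Nk k) ^ 2 := by
          rw [sq, Finset.sum_mul_sum, Finset.mul_sum]
          refine Finset.sum_congr rfl fun k _ => ?_
          rw [Finset.mul_sum]
          exact Finset.sum_congr rfl fun l _ => by ring
  have hX : (0:ℝ) ≤ ∑ i, θ i ^ 2 := Finset.sum_nonneg fun i _ => sq_nonneg _
  have hY : (0:ℝ) ≤ ∑ i, |θ i| := Finset.sum_nonneg fun i _ => abs_nonneg _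
  have hNsq : (∑ k ∈ Finset.range p, Nk k) ^ 2
      ≤ 2 * (∑ i, θ i ^ 2) + 2 * ((∑ i, |θ i|) ^ 2 / s) := by
    have hnn : 0 ≤ ∑ k ∈ Finset.range p, Nk k :=
      Finset.sum_nonneg fun k _ => hNnn k
    have hAnn : 0 ≤ Real.sqrt (∑ i, θ i ^ 2) := Real.sqrt_nonneg _
    have hBnn : 0 ≤ (∑ i, |θ i|) / Real.sqrt s := by positivity
    have h2 : (∑ k ∈ Finset.range p, Nk k) ^ 2
        ≤ (Real.sqrt (∑ i, θ i ^ 2) + (∑ i, |θ i|) / Real.sqrt s) ^ 2 :=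
      pow_le_pow_left₀ hnn hsumN 2
    have hA2 : Real.sqrt (∑ i, θ i ^ 2) ^ 2 = ∑ i, θ i ^ 2 := Real.sq_sqrt hX
    have hB2 : ((∑ i, |θ i|) / Real.sqrt s) ^ 2 = (∑ i, |θ i|) ^ 2 / s := by
      rw [div_pow, Real.sq_sqrt hscast.le]
    nlinarith [sq_nonneg (Real.sqrt (∑ i, θ i ^ 2) - (∑ i, |θ i|) / Real.sqrt s)]
  have hΓlow : -(2 * δ * (∑ i, θ i ^ 2) + 2 * δ * ((∑ i, |θ i|) ^ 2 / s))
      ≤ θ ⬝ᵥ Γ.mulVec θ := by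
    have h1 : |θ ⬝ᵥ Γ.mulVec θ| ≤ δ * (2 * (∑ i, θ i ^ 2) + 2 * ((∑ i, |θ i|) ^ 2 / s)) :=
      le_trans hΓθ (mul_le_mul_of_nonneg_left hNsq hδ)
    have h2 := neg_abs_le (θ ⬝ᵥ Γ.mulVec θ)
    nlinarith
  have hSigθ := hSig θ
  rw [hShat, Matrix.add_mulVec, dotProduct_add]
  have hY2 : (0:ℝ) ≤ (∑ i, |θ i|) ^ 2 := sq_nonneg _
  have hdiv : 0 ≤ δ * ((∑ i, |θ i|) ^ 2 / s) := by positivity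
  have hdX : 0 ≤ δ * (∑ i, θ i ^ 2) := mul_nonneg hδ hX
  have heq : (27 * δ / s) * (∑ i, |θ i|) ^ 2 = 27 * (δ * ((∑ i, |θ i|) ^ 2 / s)) := by
    ring
  linarith [hSigθ, hΓlow]
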